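/- arXiv:2412.16565 — 4 statements merged into one kernel-verified Lean document; each statement's English description precedes it below -/
import Mathlib

section
/- Let Z ≥ 2, let x₁ < 0, and let (Ω, μ) be a probability space with a measurable label map Y : Ω → {1,…,Z}. For measurable classifiers F*, F : Ω → Δ_Z, with clean risk R and noisy risk R^η defined from the pointwise loss ℓ(u, c) = L_NFL(‖q_c − u‖₁) as R(F) = ∫ ℓ(F(ω), Y(ω)) dμ(ω) and R^η(F) = ∫ [(1−η)ℓ(F(ω), Y(ω)) + (η/(Z−1)) Σ_{j ≠ Y(ω)} ℓ(F(ω), j)] dμ(ω), the risk differences satisfy R^η(F*) − R^η(F) = (1 − ηZ/(Z−1)) (R(F*) − R(F)). -/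
open MeasureTheory Real Finset

/-- Negative fraction linear (NFL) loss with parameter `x1`. -/
noncomputable def LNFL (x1 x : ℝ) : ℝ := if x1 ≤ x then x / x1 ^ 2 - 1 / x1 else -(1 / x)

/-- Exponential linear (EL) loss with parameter `x2`. -/
noncomputable def LEL (x2 x : ℝ) : ℝ := if x2 ≤ x then Real.exp x2 * (x + 1 - x2) else Real.exp x

/-- The one-hot vector `q_c` for class `c`. -/
def onehot {Z : ℕ} (c : Fin Z) : Fin Z → ℝ := fun z => if z = c then 1 else 0

/-- The ℓ1 norm on `ℝ^Z`. -/
noncomputable def l1norm {Z : ℕ} (v : Fin Z → ℝ) : ℝ := ∑ z, |v z|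

/-- Membership in the probability simplex `Δ_Z`. -/
def inSimplex {Z : ℕ} (u : Fin Z → ℝ) : Prop := (∀ z, 0 ≤ u z) ∧ ∑ z, u z = 1

lemma l1_onehot_simplex {Z : ℕ} (u : Fin Z → ℝ) (hu : inSimplex u) (c : Fin Z) :
    l1norm (onehot c - u) = 2 - 2 * u c := by
  obtain ⟨h0, h1⟩ := hu
  have huc : u c ≤ 1 := h1 ▸ Finset.single_le_sum (fun i _ => h0 i) (Finset.mem_univ c)
  unfold l1norm onehot
  simp only [Pi.sub_apply]
  rw [← Finset.add_sum_erase _ _ (Finset.mem_univ c), if_pos rfl]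
  have h2 : ∑ z ∈ Finset.univ.erase c, |(if z = c then (1:ℝ) else 0) - u z|
      = ∑ z ∈ Finset.univ.erase c, u z := by
    refine Finset.sum_congr rfl fun z hz => ?_
    rw [if_neg (Finset.mem_erase.mp hz).1, zero_sub, abs_neg, abs_of_nonneg (h0 z)]
  rw [h2, abs_of_nonneg (by linarith), Finset.sum_erase_eq_sub (Finset.mem_univ c), h1]
  ring

lemma lnfl_eval {x1 : ℝ} (hx1 : x1 < 0) {x : ℝ} (hx : 0 ≤ x) :
    LNFL x1 x = x / x1 ^ 2 - 1 / x1 := if_pos (by linarith)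

lemma lnfl_onehot {Z : ℕ} {x1 : ℝ} (hx1 : x1 < 0) (u : Fin Z → ℝ) (hu : inSimplex u)
    (c : Fin Z) :
    LNFL x1 (l1norm (onehot c - u)) = (2 - 2 * u c) / x1 ^ 2 - 1 / x1 := by
  have huc : u c ≤ 1 := hu.2 ▸ Finset.single_le_sum (fun i _ => hu.1 i) (Finset.mem_univ c)
  rw [l1_onehot_simplex u hu c, lnfl_eval hx1 (by linarith)]

lemma lnfl_sum_ne {Z : ℕ} {x1 : ℝ} (hx1 : x1 < 0) (u : Fin Z → ℝ) (hu : inSimplex u)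
    (c : Fin Z) :
    ∑ j ∈ Finset.univ.filter (· ≠ c), LNFL x1 (l1norm (onehot j - u))
      = ((2 * Z - 2) / x1 ^ 2 - Z / x1) - LNFL x1 (l1norm (onehot c - u)) := by
  have hall : ∑ j : Fin Z, LNFL x1 (l1norm (onehot j - u))
      = (2 * Z - 2) / x1 ^ 2 - Z / x1 := by
    have : ∀ j : Fin Z, LNFL x1 (l1norm (onehot j - u)) = (2 - 2 * u j) / x1 ^ 2 - 1 / x1 :=
      fun j => lnfl_onehot hx1 u hu j
    rw [Finset.sum_congr rfl fun j _ => this j]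
    have hsum := hu.2
    rw [Finset.sum_sub_distrib, Finset.sum_const, ← Finset.sum_div, Finset.sum_sub_distrib,
      Finset.sum_const, ← Finset.mul_sum, hsum]
    simp [Finset.card_univ]
    ring
  rw [Finset.filter_ne', Finset.sum_erase_eq_sub (Finset.mem_univ c), hall]


/-- Under the NFL loss, the difference of symmetric-noise risks is proportional
to the difference of clean risks:
`R^η(F*) - R^η(F) = (1 - ηZ/(Z-1)) (R(F*) - R(F))`. -/
theorem nfl_noisy_risk_difference {Z : ℕ} (hZ : 2 ≤ Z) {x1 : ℝ} (hx1 : x1 < 0)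
    {Ω : Type*} [MeasurableSpace Ω] (μ : Measure Ω) [IsProbabilityMeasure μ]
    (Y : Ω → Fin Z) (hY : Measurable Y) (η : ℝ)
    (Fstar F : Ω → Fin Z → ℝ) (hFstar : Measurable Fstar) (hF : Measurable F)
    (hFstarS : ∀ ω, inSimplex (Fstar ω)) (hFS : ∀ ω, inSimplex (F ω)) :
    (∫ ω, ((1 - η) * LNFL x1 (l1norm (onehot (Y ω) - Fstar ω))
        + η / ((Z : ℝ) - 1) *
          ∑ j ∈ Finset.univ.filter (· ≠ Y ω), LNFL x1 (l1norm (onehot j - Fstar ω))) ∂μ)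
    - (∫ ω, ((1 - η) * LNFL x1 (l1norm (onehot (Y ω) - F ω))
        + η / ((Z : ℝ) - 1) *
          ∑ j ∈ Finset.univ.filter (· ≠ Y ω), LNFL x1 (l1norm (onehot j - F ω))) ∂μ)
    = (1 - η * Z / ((Z : ℝ) - 1)) *
        ((∫ ω, LNFL x1 (l1norm (onehot (Y ω) - Fstar ω)) ∂μ)
          - ∫ ω, LNFL x1 (l1norm (onehot (Y ω) - F ω)) ∂μ) := by
  have hZ1 : (1:ℝ) ≤ (Z:ℝ) - 1 := by
    have : (2:ℝ) ≤ (Z:ℝ) := by exact_mod_cast hZ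
    linarith
  have hZne : ((Z:ℝ) - 1) ≠ 0 := by linarith
  set A : ℝ := 1 - η * Z / ((Z : ℝ) - 1) with hA
  set K : ℝ := (2 * Z - 2) / x1 ^ 2 - Z / x1 with hK
  set B : ℝ := η / ((Z:ℝ) - 1) * K with hB
  have key : ∀ (G : Ω → Fin Z → ℝ), Measurable G → (∀ ω, inSimplex (G ω)) →
      (∫ ω, ((1 - η) * LNFL x1 (l1norm (onehot (Y ω) - G ω))
          + η / ((Z : ℝ) - 1) *
            ∑ j ∈ Finset.univ.filter (· ≠ Y ω), LNFL x1 (l1norm (onehot j - G ω))) ∂μ)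
      = A * (∫ ω, LNFL x1 (l1norm (onehot (Y ω) - G ω)) ∂μ) + B := by
    intro G hG hGS
    have hg : Measurable fun ω => G ω (Y ω) := by
      have heq : (fun ω => G ω (Y ω)) = fun ω => ∑ j : Fin Z, if Y ω = j then G ω j else 0 := by
        funext ω; simp
      rw [heq]
      exact Finset.measurable_sum _ fun j _ =>
        Measurable.ite (hY (measurableSet_singleton j)) ((measurable_pi_apply j).comp hG)
          measurable_const
    have hgbd : ∀ ω, 0 ≤ G ω (Y ω) ∧ G ω (Y ω) ≤ 1 := fun ω =>
      ⟨(hGS ω).1 _, (hGS ω).2 ▸ Finset.single_le_sum (fun i _ => (hGS ω).1 i) (Finset.mem_univ _)⟩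
    have hgint : Integrable (fun ω => G ω (Y ω)) μ := by
      refine (integrable_const (1:ℝ)).mono' hg.aestronglyMeasurable ?_
      filter_upwards with ω
      rw [Real.norm_eq_abs, abs_le]
      exact ⟨by linarith [(hgbd ω).1], (hgbd ω).2⟩
    have hleq : ∀ ω, LNFL x1 (l1norm (onehot (Y ω) - G ω))
        = (2 - 2 * G ω (Y ω)) / x1 ^ 2 - 1 / x1 := fun ω => lnfl_onehot hx1 _ (hGS ω) _
    have hlint : Integrable (fun ω => LNFL x1 (l1norm (onehot (Y ω) - G ω))) μ := by
      have : (fun ω => LNFL x1 (l1norm (onehot (Y ω) - G ω)))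
          = fun ω => (2 - 2 * G ω (Y ω)) / x1 ^ 2 - 1 / x1 := funext hleq
      rw [this]
      exact (((integrable_const (2:ℝ)).sub (hgint.const_mul 2)).div_const _).sub
        (integrable_const _)
    have hpt : ∀ ω, (1 - η) * LNFL x1 (l1norm (onehot (Y ω) - G ω))
        + η / ((Z : ℝ) - 1) *
          ∑ j ∈ Finset.univ.filter (· ≠ Y ω), LNFL x1 (l1norm (onehot j - G ω))
        = A * LNFL x1 (l1norm (onehot (Y ω) - G ω)) + B := by
      intro ω
      rw [lnfl_sum_ne hx1 _ (hGS ω), hA, hB, hK]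
      field_simp
      ring
    calc (∫ ω, ((1 - η) * LNFL x1 (l1norm (onehot (Y ω) - G ω))
          + η / ((Z : ℝ) - 1) *
            ∑ j ∈ Finset.univ.filter (· ≠ Y ω), LNFL x1 (l1norm (onehot j - G ω))) ∂μ)
        = ∫ ω, (A * LNFL x1 (l1norm (onehot (Y ω) - G ω)) + B) ∂μ := by
          exact integral_congr_ae (Filter.Eventually.of_forall hpt)
      _ = A * (∫ ω, LNFL x1 (l1norm (onehot (Y ω) - G ω)) ∂μ) + B := by
          rw [integral_add (hlint.const_mul A) (integrable_const B), integral_const_mul,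
            integral_const]
          simp
  rw [key Fstar hFstar hFstarS, key F hF hFS]
  ring
end

section
/- Let Z ≥ 2 be an integer and C ∈ ℝ, let (Ω, μ) be a probability space with a measurable label map Y : Ω → {1,…,Z}, and let a, b : Ω → ℝ^Z be measurable and bounded with Σ_{j=1}^Z a(ω)_j = C and Σ_{j=1}^Z b(ω)_j = C for every ω. Define R(a) = ∫ a(ω)_{Y(ω)} dμ(ω) and R^η(a) = ∫ [(1−η) a(ω)_{Y(ω)} + (η/(Z−1)) Σ_{j ≠ Y(ω)} a(ω)_j] dμ(ω), and similarly for b. If 0 ≤ η < (Z−1)/Z and R(a) ≤ R(b), then R^η(a) ≤ R^η(b); i.e., any loss whose sum over all Z labels is a constant independent of the prediction is noise-tolerant to symmetric label noise of rate η < (Z−1)/Z. -/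
open MeasureTheory Real Finset

/-!
Since the loss sums to `C` over all labels, the off-label sum equals `C - a(Y)`, so the noisy
risk is the affine function `(1 - η - η/(Z-1)) R(a) + η C/(Z-1)` of the clean risk. Its slope
`1 - ηZ/(Z-1)` is nonnegative exactly when `η ≤ (Z-1)/Z`, so it preserves the order of risks.
-/

theorem Measurable.apply_of_countable {Ω ι β : Type*} [MeasurableSpace Ω] [MeasurableSpace ι]
    [Countable ι] [MeasurableSingletonClass ι] [MeasurableSpace β]
    {a : Ω → ι → β} (ha : Measurable a) {Y : Ω → ι} (hY : Measurable Y) :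
    Measurable fun ω => a ω (Y ω) :=
  (measurable_from_prod_countable_left (f := fun p : Ω × ι => a p.1 p.2)
    fun j => (measurable_pi_apply j).comp ha).comp (measurable_id.prodMk hY)

theorem mul_add_mul_sum_ne_eq {ι R : Type*} [Fintype ι] [DecidableEq ι] [CommRing R]
    (x : ι → R) (i : ι) (η c : R) :
    (1 - η) * x i + c * ∑ j ∈ univ.filter (· ≠ i), x j
      = (1 - η - c) * x i + c * ∑ j, x j := by
  rw [filter_ne', sum_erase_eq_sub (mem_univ i)]
  ring

theorem integral_symmetric_noise_eq {Z : ℕ} {Ω : Type*} [MeasurableSpace Ω]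
    (μ : Measure Ω) [IsProbabilityMeasure μ] (Y : Ω → Fin Z) (hY : Measurable Y)
    (η c C : ℝ) (a : Ω → Fin Z → ℝ) (ha : Measurable a)
    (habd : ∃ M, ∀ ω j, |a ω j| ≤ M) (hasum : ∀ ω, ∑ j, a ω j = C) :
    ∫ ω, ((1 - η) * a ω (Y ω) + c * ∑ j ∈ univ.filter (· ≠ Y ω), a ω j) ∂μ
      = (1 - η - c) * ∫ ω, a ω (Y ω) ∂μ + c * C := by
  obtain ⟨M, hM⟩ := habd
  have hint : Integrable (fun ω => a ω (Y ω)) μ :=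
    .of_bound (ha.apply_of_countable hY).aestronglyMeasurable M
      (.of_forall fun ω => (norm_eq_abs _).trans_le (hM ω (Y ω)))
  simp only [mul_add_mul_sum_ne_eq, hasum]
  rw [integral_add (hint.const_mul _) (integrable_const _), integral_const_mul,
    integral_const, probReal_univ, one_smul]

theorem symmetric_noise_slope_nonneg {Z η : ℝ} (hZ : 1 < Z) (hη : η < (Z - 1) / Z) :
    0 ≤ 1 - η - η / (Z - 1) := by
  have hZ1 : 0 < Z - 1 := sub_pos.mpr hZ
  have hηZ : η * Z < Z - 1 := (lt_div_iff₀ (by linarith)).mp hη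
  have : η / (Z - 1) ≤ 1 - η := by
    rw [div_le_iff₀ hZ1]
    nlinarith
  linarith

theorem constant_sum_noise_tolerant_general {Z : ℕ} (hZ : 2 ≤ Z) (C : ℝ)
    {Ω : Type*} [MeasurableSpace Ω] (μ : Measure Ω) [IsProbabilityMeasure μ]
    (Y : Ω → Fin Z) (hY : Measurable Y)
    {η : ℝ} (hη : η < ((Z : ℝ) - 1) / Z)
    (a b : Ω → Fin Z → ℝ) (ha : Measurable a) (hb : Measurable b)
    (habd : ∃ M, ∀ ω j, |a ω j| ≤ M) (hbbd : ∃ M, ∀ ω j, |b ω j| ≤ M)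
    (hasum : ∀ ω, ∑ j, a ω j = C) (hbsum : ∀ ω, ∑ j, b ω j = C)
    (hclean : (∫ ω, a ω (Y ω) ∂μ) ≤ ∫ ω, b ω (Y ω) ∂μ) :
    (∫ ω, ((1 - η) * a ω (Y ω)
        + η / ((Z : ℝ) - 1) * ∑ j ∈ Finset.univ.filter (· ≠ Y ω), a ω j) ∂μ)
    ≤ ∫ ω, ((1 - η) * b ω (Y ω)
        + η / ((Z : ℝ) - 1) * ∑ j ∈ Finset.univ.filter (· ≠ Y ω), b ω j) ∂μ := by
  have hZ1 : (1 : ℝ) < Z := by exact_mod_cast hZ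
  rw [integral_symmetric_noise_eq μ Y hY η _ C a ha habd hasum,
    integral_symmetric_noise_eq μ Y hY η _ C b hb hbbd hbsum]
  gcongr
  exact symmetric_noise_slope_nonneg hZ1 hη

/-- Any loss whose sum over all `Z` labels is a constant independent of the
prediction is noise-tolerant to symmetric label noise of rate `η < (Z-1)/Z`:
ordering of clean risks is preserved by the symmetric-noise risks. -/
theorem constant_sum_noise_tolerant {Z : ℕ} (hZ : 2 ≤ Z) (C : ℝ)
    {Ω : Type*} [MeasurableSpace Ω] (μ : Measure Ω) [IsProbabilityMeasure μ]
    (Y : Ω → Fin Z) (hY : Measurable Y)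
    {η : ℝ} (hη0 : 0 ≤ η) (hη : η < ((Z : ℝ) - 1) / Z)
    (a b : Ω → Fin Z → ℝ) (ha : Measurable a) (hb : Measurable b)
    (habd : ∃ M, ∀ ω j, |a ω j| ≤ M) (hbbd : ∃ M, ∀ ω j, |b ω j| ≤ M)
    (hasum : ∀ ω, ∑ j, a ω j = C) (hbsum : ∀ ω, ∑ j, b ω j = C)
    (hclean : (∫ ω, a ω (Y ω) ∂μ) ≤ ∫ ω, b ω (Y ω) ∂μ) :
    (∫ ω, ((1 - η) * a ω (Y ω)
        + η / ((Z : ℝ) - 1) * ∑ j ∈ Finset.univ.filter (· ≠ Y ω), a ω j) ∂μ)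
    ≤ ∫ ω, ((1 - η) * b ω (Y ω)
        + η / ((Z : ℝ) - 1) * ∑ j ∈ Finset.univ.filter (· ≠ Y ω), b ω j) ∂μ :=
  constant_sum_noise_tolerant_general hZ C μ Y hY hη a b ha hb habd hbbd hasum hbsum hclean
end

section
/- Let Z ≥ 2, let x₁ < 0, and let u ∈ Δ_Z. Then Σ_{c=1}^Z L_NFL(‖q_c − u‖₁) = (2(Z−1) − Z x₁)/x₁²; in particular this sum is a constant independent of u. -/
open MeasureTheory Real Finset

/-! Every point `u` of the simplex is at ℓ1 distance `2 (1 - u c) ≥ 0 ≥ x₁` from `q_c`, so all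
losses fall on the linear branch of `L_NFL`; the sum of a linear function over the classes only
sees `∑ c, u c = 1`. -/

theorem LNFL_of_le {x1 x : ℝ} (h : x1 ≤ x) : LNFL x1 x = x / x1 ^ 2 - 1 / x1 := if_pos h

namespace inSimplex

variable {Z : ℕ} {u : Fin Z → ℝ}

theorem le_one (hu : inSimplex u) (c : Fin Z) : u c ≤ 1 :=
  hu.2 ▸ single_le_sum (fun z _ => hu.1 z) (mem_univ c)

theorem sum_compl_singleton (hu : inSimplex u) (c : Fin Z) : ∑ z ∈ {c}ᶜ, u z = 1 - u c := by
  rw [← hu.2, Fintype.sum_eq_add_sum_compl c u]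
  ring

theorem sum_one_sub (hu : inSimplex u) : ∑ c, (1 - u c) = Z - 1 := by
  simp [sum_sub_distrib, hu.2]

theorem l1norm_onehot_sub (hu : inSimplex u) (c : Fin Z) :
    l1norm (onehot c - u) = 2 * (1 - u c) :=
  calc l1norm (onehot c - u) = |1 - u c| + ∑ z ∈ {c}ᶜ, |u z| := by
        rw [l1norm, Fintype.sum_eq_add_sum_compl c]
        congr 1
        · simp [onehot]
        · refine sum_congr rfl fun z hz => ?_
          simp [onehot, show z ≠ c by simpa using hz]
    _ = 2 * (1 - u c) := by
        rw [abs_of_nonneg (sub_nonneg.2 (hu.le_one c)),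
          sum_congr rfl fun z _ => abs_of_nonneg (hu.1 z), hu.sum_compl_singleton c]
        ring

end inSimplex

theorem nfl_loss_sum_constant_general {Z : ℕ} {x1 : ℝ} (hx1 : x1 < 0)
    (u : Fin Z → ℝ) (hu : inSimplex u) :
    ∑ c, LNFL x1 (l1norm (onehot c - u))
      = (2 * ((Z : ℝ) - 1) - Z * x1) / x1 ^ 2 := by
  have hterm (c : Fin Z) :
      LNFL x1 (l1norm (onehot c - u)) = 2 * (1 - u c) / x1 ^ 2 - 1 / x1 := by
    rw [hu.l1norm_onehot_sub c, LNFL_of_le]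
    linarith [hu.le_one c]
  rw [sum_congr rfl fun c _ => hterm c, sum_sub_distrib, ← sum_div, ← mul_sum, hu.sum_one_sub]
  simp only [sum_const, card_univ, Fintype.card_fin, nsmul_eq_mul]
  field_simp

/-- The sum over all classes of the NFL loss of the ℓ1 distance from a point of
the simplex to the one-hot vectors is the constant `(2(Z-1) - Z x₁)/x₁²`,
independent of the point `u`. -/
theorem nfl_loss_sum_constant {Z : ℕ} (hZ : 2 ≤ Z) {x1 : ℝ} (hx1 : x1 < 0)
    (u : Fin Z → ℝ) (hu : inSimplex u) :
    ∑ c, LNFL x1 (l1norm (onehot c - u))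
      = (2 * ((Z : ℝ) - 1) - Z * x1) / x1 ^ 2 :=
  nfl_loss_sum_constant_general hx1 u hu
end

section
/- Let Z ≥ 2, let x₂ ≤ 0, and let u ∈ Δ_Z. Then Σ_{c=1}^Z L_EL(‖q_c − u‖₁) = (3Z − 2 − Z x₂) e^{x₂}; in particular this sum is a constant independent of u. -/
open MeasureTheory Real Finset

/-! The ℓ1 distance from `u ∈ Δ_Z` to the vertex `q_c` is `2 (1 - u_c) ≥ 0 ≥ x₂`, so every term
lies on the linear branch of `L_EL`; the sum is then affine in `Σ_c u_c = 1`. -/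

theorem LEL_of_le {x2 x : ℝ} (h : x2 ≤ x) : LEL x2 x = Real.exp x2 * (x + 1 - x2) :=
  if_pos h

section Simplex

variable {Z : ℕ} {u : Fin Z → ℝ}

theorem inSimplex.le_one_s9 (hu : inSimplex u) (c : Fin Z) : u c ≤ 1 :=
  hu.2 ▸ single_le_sum (fun z _ => hu.1 z) (mem_univ c)

theorem inSimplex.l1norm_onehot_sub_s9 (hu : inSimplex u) (c : Fin Z) :
    l1norm (onehot c - u) = 2 * (1 - u c) := by
  have off_c : ∀ z ∈ univ.erase c, |(onehot c - u) z| = u z := fun z hz => by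
    simp [onehot, ne_of_mem_erase hz, abs_of_nonneg (hu.1 z)]
  have at_c : |(onehot c - u) c| = 1 - u c := by
    simp [onehot, abs_of_nonneg (sub_nonneg.2 (hu.le_one_s9 c))]
  rw [l1norm, ← add_sum_erase _ _ (mem_univ c), at_c, sum_congr rfl off_c,
    sum_erase_eq_sub (mem_univ c), hu.2]
  ring

end Simplex

theorem el_loss_sum_constant_general {Z : ℕ} {x2 : ℝ} (hx2 : x2 ≤ 0)
    (u : Fin Z → ℝ) (hu : inSimplex u) :
    ∑ c, LEL x2 (l1norm (onehot c - u))
      = (3 * (Z : ℝ) - 2 - Z * x2) * Real.exp x2 := by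
  have linear_branch : ∀ c, LEL x2 (l1norm (onehot c - u))
      = Real.exp x2 * (2 * (1 - u c) + 1 - x2) := fun c => by
    rw [hu.l1norm_onehot_sub_s9 c, LEL_of_le]
    linarith [hu.le_one_s9 c]
  simp only [linear_branch, ← mul_sum, sum_sub_distrib, sum_add_distrib, hu.2,
    sum_const, card_univ, Fintype.card_fin, nsmul_eq_mul, mul_one]
  ring

/-- The sum over all classes of the EL loss of the ℓ1 distance from a point of
the simplex to the one-hot vectors is the constant `(3Z - 2 - Z x₂) e^{x₂}`,
independent of the point `u`. -/
theorem el_loss_sum_constant {Z : ℕ} (hZ : 2 ≤ Z) {x2 : ℝ} (hx2 : x2 ≤ 0)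
    (u : Fin Z → ℝ) (hu : inSimplex u) :
    ∑ c, LEL x2 (l1norm (onehot c - u))
      = (3 * (Z : ℝ) - 2 - Z * x2) * Real.exp x2 :=
  el_loss_sum_constant_general hx2 u hu
end
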